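/- Let n ≥ 1, let μ₁, …, μ_n > 0 be real numbers with partial sums a₀ = 0, a_i = μ₁ + ⋯ + μ_i, let λ₀, λ₁, …, λ_n > 0, and let c_{ij} ∈ ℂ (1 ≤ i ≤ n, 0 ≤ j < i) be arbitrary complex coefficients. For z ∈ ℂ \ {0} set P_i(z) = z^{a_i} + Σ_{j=0}^{i−1} c_{ij} z^{a_j} (principal complex powers), D(z) = λ₀ + Σ_{i=1}^n λ_i |P_i(z)|², and define the vector Θ(z) ∈ ℝ^{n²+2n} whose components are: ((λ_n/λ₀)|P_n(z)|² − 1)/D(z); ((λ_n/λ_i)|P_n(z)|² − |P_i(z)|²)/D(z) for i = 1, …, n−1; and, for each pair 0 ≤ j < i ≤ n, the two components −2λ_i Re( z^{a_j} conj(P_i(z)) )/D(z) and 2λ_i Im( z^{a_j} conj(P_i(z)) )/D(z). Then there exist points p₁, …, p_{n²+2n} ∈ ℂ \ {0} such that the (n²+2n)×(n²+2n) real matrix M = (Θ(p₁), …, Θ(p_{n²+2n})) is invertible. -/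

import Mathlib

/-!
Write `e(z) = (z^{a₀}, …, z^{aₙ})`, so that `Pᵢ = (C e)ᵢ` with `C` unit lower triangular (and
`P₀ = 1` since `a₀ = 0`). For coefficients `α`, the numerator of `Σ_r α_r Θ_r(z)` is
`Re (e ⬝ᵥ (G C̄) ē)`, where `C̄` is the entrywise conjugate of `C` and `G = Cᵀ diag(Λ) + K` is upper
triangular: its diagonal `Λ` is real and linear in the `λ`-components of `α`, and its strictly
upper part `K` encodes the remaining components.

On the arc `z = exp((1 + i)θ)`, `-π < θ < π`, principal powers are honest exponentials and
`z^{aⱼ} conj(z^{aₗ}) = exp(((1 + i)aⱼ + (1 - i)aₗ)θ)`; these exponents are pairwise distinct since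
the `aⱼ` are, so by Dedekind's independence of characters (plus the identity theorem to pass from
the arc to the whole line) a vanishing combination forces `G C̄` to be skew-Hermitian. A triangular
matrix argument then gives `G = 0`, i.e. `α = 0`. So the components of `Θ` are linearly independent
functions on the arc, and any linearly independent family of functions admits sample points with
an invertible evaluation matrix.
-/

/-- Index type with `n² + 2n` elements: `n` indices for the `λ`-derivative components, and,
for each pair `0 ≤ j < i ≤ n`, two indices (a real-part one, `false`, and an
imaginary-part one, `true`). -/
abbrev TodaIdx (n : ℕ) :=
  Fin n ⊕ ({q : Fin (n + 1) × Fin (n + 1) // q.1 < q.2} × Bool)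

open Complex ComplexConjugate Function Set Matrix

theorem LinearIndependent.exists_det_ne_zero {K X ι : Type*} [Field K] [Fintype ι]
    [DecidableEq ι] {g : ι → X → K} (hg : LinearIndependent K g) :
    ∃ p : ι → X, (Matrix.of fun i t => g i (p t)).det ≠ 0 := by
  set v : X → ι → K := fun x i => g i x
  have hspan : Submodule.span K (range v) = ⊤ := by
    by_contra hne
    obtain ⟨f, hf, hker⟩ := Submodule.exists_le_ker_of_lt_top _ (lt_top_iff_ne_top.2 hne)
    set α : ι → K := fun i => f fun j => if i = j then 1 else 0
    have hα : ∀ i, α i = 0 := by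
      refine Fintype.linearIndependent_iff.1 hg α (funext fun x => ?_)
      have hx : f (v x) = 0 := hker (Submodule.subset_span ⟨x, rfl⟩)
      rw [LinearMap.pi_apply_eq_sum_univ f] at hx
      simpa [v, mul_comm] using hx
    refine hf (LinearMap.ext fun w => ?_)
    rw [LinearMap.pi_apply_eq_sum_univ f]
    exact Finset.sum_eq_zero fun i _ => mul_eq_zero_of_right _ (hα i)
  obtain ⟨κ, p, -, hκspan, hκ⟩ := exists_linearIndependent' K v
  rw [hspan] at hκspan
  let b := Module.Basis.mk hκ hκspan.ge
  have : Fintype κ := FiniteDimensional.fintypeBasisIndex b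
  have hcard : Fintype.card ι = Fintype.card κ := by
    rw [← Module.finrank_eq_card_basis b, Module.finrank_fintype_fun_eq_card]
  let e : ι ≃ κ := Fintype.equivOfCardEq hcard
  refine ⟨p ∘ e, ?_⟩
  rw [← isUnit_iff_ne_zero, ← Matrix.isUnit_iff_isUnit_det,
    ← Matrix.linearIndependent_cols_iff_isUnit]
  exact hκ.comp e e.injective

/-- Downward induction on columns: once the columns of `G` after `i` vanish, column `i` of `G * L`
is column `i` of `G`, and row `i` of `G * L` is `G i i` times row `i` of `L`. -/
theorem Matrix.eq_zero_of_mul_add_conjTranspose_eq_zero {ι R : Type*} [Fintype ι]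
    [LinearOrder ι] [Ring R] [StarRing R] [NoZeroDivisors R] [CharZero R] {G L : Matrix ι ι R}
    (hG : G.BlockTriangular id) (hL : L.BlockTriangular OrderDual.toDual)
    (hL1 : ∀ i, L i i = 1) (hGd : ∀ i, star (G i i) = G i i)
    (h : G * L + (G * L)ᴴ = 0) : G = 0 := by
  suffices hcol0 : ∀ i j, G j i = 0 from Matrix.ext fun j i => hcol0 i j
  intro i
  induction i using WellFoundedGT.induction with
  | _ i ih =>
  have hcol (j : ι) : (G * L) j i = G j i := by
    rw [mul_apply, Finset.sum_eq_single i (fun k _ hki => ?_) (by simp), hL1, mul_one]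
    rcases hki.lt_or_gt with hk | hk
    · rw [hL (show OrderDual.toDual i < OrderDual.toDual k from hk), mul_zero]
    · rw [ih k hk j, zero_mul]
  have hrow (j : ι) : (G * L) i j = G i i * L i j := by
    rw [mul_apply, Finset.sum_eq_single i (fun k _ hki => ?_) (by simp)]
    rcases hki.lt_or_gt with hk | hk
    · rw [hG (show id k < id i from hk), zero_mul]
    · rw [ih k hk i, zero_mul]
  have hskew (j : ι) : G j i + star (G i i * L i j) = 0 := by
    have hji := congrFun₂ h j i
    rwa [add_apply, conjTranspose_apply, hcol, hrow, zero_apply] at hji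
  have hii : G i i = 0 := by
    simpa [hL1, hGd] using hskew i
  intro j
  simpa [hii] using hskew j

section SesquilinearForm

variable {ι R : Type*} [Fintype ι]

theorem Matrix.dotProduct_mulVec_star_eq_sum [CommSemiring R] [StarRing R]
    (N : Matrix ι ι R) (u v : ι → R) :
    u ⬝ᵥ N *ᵥ star v = ∑ jl : ι × ι, N jl.1 jl.2 * (u jl.1 * star (v jl.2)) := by
  simp only [dotProduct, mulVec, Finset.mul_sum, Fintype.sum_prod_type, Pi.star_apply]
  exact Finset.sum_congr rfl fun j _ => Finset.sum_congr rfl fun l _ => by ring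

theorem Matrix.star_dotProduct_mulVec_star [CommSemiring R] [StarRing R]
    (N : Matrix ι ι R) (v : ι → R) :
    star (v ⬝ᵥ N *ᵥ star v) = v ⬝ᵥ Nᴴ *ᵥ star v := by
  have hvec : v ᵥ* Nᴴ = star (N *ᵥ star v) := by rw [star_mulVec, star_star]
  rw [dotProduct_mulVec v Nᴴ, hvec, star_dotProduct, star_star]

theorem Matrix.dotProduct_transpose_mul_add_mul_map_star [CommRing R] [StarRing R]
    (C Dg K : Matrix ι ι R) (e : ι → R) :
    e ⬝ᵥ ((Cᵀ * Dg + K) * C.map star) *ᵥ star e =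
      (C *ᵥ e) ⬝ᵥ Dg *ᵥ star (C *ᵥ e) + e ⬝ᵥ K *ᵥ star (C *ᵥ e) := by
  rw [star_mulVec, ← mulVec_transpose, conjTranspose_transpose, ← mulVec_mulVec, add_mulVec,
    dotProduct_add, ← mulVec_mulVec, dotProduct_mulVec e Cᵀ, vecMul_transpose]

end SesquilinearForm

section Exponentials

variable {ι : Type*}

noncomputable def cexpMulHom (w : ℂ) : Multiplicative ℝ →* ℂ where
  toFun x := exp (w * x.toAdd)
  map_one' := by simp
  map_mul' x y := by simp [mul_add, exp_add]

theorem cexpMulHom_injective : Injective cexpMulHom := by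
  intro w w' h
  have hderiv (w : ℂ) : HasDerivAt (fun x : ℝ => exp (w * x)) w 0 := by
    simpa using ((hasDerivAt_id (0 : ℝ)).ofReal_comp.const_mul w).cexp
  have heq : (fun x : ℝ => exp (w * x)) = fun x : ℝ => exp (w' * x) :=
    funext fun x => DFunLike.congr_fun h (Multiplicative.ofAdd x)
  exact (hderiv w).unique (heq ▸ hderiv w')

theorem linearIndependent_cexp_mul_ofReal {w : ι → ℂ} (hw : Injective w) :
    LinearIndependent ℂ (fun i (x : ℝ) => exp (w i * x)) :=
  (linearIndependent_monoidHom (Multiplicative ℝ) ℂ).comp (cexpMulHom ∘ w)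
    (cexpMulHom_injective.comp hw)

theorem linearIndependent_cexp_mul_ofReal_of_isOpen {w : ι → ℂ} (hw : Injective w)
    {s : Set ℝ} (hs : IsOpen s) (hne : s.Nonempty) :
    LinearIndependent ℂ (fun i (x : s) => exp (w i * x)) := by
  rw [linearIndependent_iff']
  intro t c hc
  obtain ⟨x₀, hx₀⟩ := hne
  set f : ℝ → ℂ := fun x => ∑ i ∈ t, c i * exp (w i * x)
  have hf : AnalyticOnNhd ℝ f univ := fun x _ => by
    have : AnalyticAt ℂ (fun ζ : ℂ => ∑ i ∈ t, c i * exp (w i * ζ)) x := by fun_prop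
    exact this.restrictScalars.comp (ofRealCLM.analyticAt x)
  have hf0 : f = 0 := by
    refine hf.eq_of_eventuallyEq (z₀ := x₀) analyticOnNhd_const ?_
    filter_upwards [hs.mem_nhds hx₀] with x hx
    simpa using congrFun hc ⟨x, hx⟩
  refine linearIndependent_iff'.1 (linearIndependent_cexp_mul_ofReal hw) t c ?_
  ext x
  simpa using congrFun hf0 x

theorem Complex.exp_cpow_of_im_mem_Ioc {w : ℂ} (hw : w.im ∈ Ioc (-Real.pi) Real.pi) (x : ℂ) :
    exp w ^ x = exp (w * x) := by
  rw [cpow_def_of_ne_zero (exp_ne_zero w), log_exp hw.1 hw.2]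

theorem linearIndependent_cpow_mul_conj_cpow {a : ι → ℝ} (ha : Injective a) :
    LinearIndependent ℂ (fun (jl : ι × ι) (θ : Ioo (-Real.pi) Real.pi) =>
      exp ((1 + I) * θ) ^ (a jl.1 : ℂ) * conj (exp ((1 + I) * θ) ^ (a jl.2 : ℂ))) := by
  set w : ι × ι → ℂ := fun jl => (1 + I) * a jl.1 + (1 - I) * a jl.2
  have hw : Injective w := by
    intro jl jl' h
    have h1 := congrArg re h
    have h2 := congrArg im h
    simp only [w, add_re, add_im, mul_re, mul_im, sub_re, sub_im, one_re, one_im, I_re, I_im,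
      ofReal_re, ofReal_im] at h1 h2
    ext <;> apply ha <;> linarith
  convert linearIndependent_cexp_mul_ofReal_of_isOpen hw isOpen_Ioo
    ⟨0, neg_neg_iff_pos.2 Real.pi_pos, Real.pi_pos⟩ using 1
  ext jl θ
  have hθ : ((1 + I) * θ).im ∈ Ioc (-Real.pi) Real.pi := by
    simpa using Ioo_subset_Ioc_self θ.2
  rw [exp_cpow_of_im_mem_Ioc hθ, exp_cpow_of_im_mem_Ioc hθ, ← exp_conj, ← exp_add]
  congr 1
  simp only [w, map_mul, map_add, map_one, conj_I, conj_ofReal]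
  ring

theorem Matrix.add_conjTranspose_eq_zero_of_re_eq_zero [Fintype ι] {a : ι → ℝ}
    (ha : Injective a) {M : Matrix ι ι ℂ}
    (h : ∀ θ ∈ Ioo (-Real.pi) Real.pi,
      ((fun j => exp ((1 + I) * θ) ^ (a j : ℂ)) ⬝ᵥ
        M *ᵥ star (fun j => exp ((1 + I) * θ) ^ (a j : ℂ))).re = 0) :
    M + Mᴴ = 0 := by
  have hzero := Fintype.linearIndependent_iff.1 (linearIndependent_cpow_mul_conj_cpow ha)
    (fun jl => (M + Mᴴ) jl.1 jl.2) (funext fun θ => ?_)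
  · exact Matrix.ext fun j l => hzero (j, l)
  have hv : (fun j => exp ((1 + I) * (θ : ℝ)) ^ (a j : ℂ)) ⬝ᵥ (M + Mᴴ) *ᵥ
      star (fun j => exp ((1 + I) * (θ : ℝ)) ^ (a j : ℂ)) = 0 := by
    rw [add_mulVec, dotProduct_add, ← star_dotProduct_mulVec_star, Complex.star_def, add_conj,
      h θ θ.2, mul_zero, ofReal_zero]
  rw [dotProduct_mulVec_star_eq_sum] at hv
  simpa only [Finset.sum_apply, Pi.smul_apply, smul_eq_mul, Pi.zero_apply, Complex.star_def]
    using hv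

end Exponentials

noncomputable def todaTheta (n : ℕ) (lam a : ℕ → ℝ) (P : ℂ → ℕ → ℂ) (D : ℂ → ℝ)
    (r : TodaIdx n) (z : ℂ) : ℝ :=
  match r with
  | .inl k =>
      if (k : ℕ) = 0 then (lam n / lam 0 * ‖P z n‖ ^ 2 - 1) / D z
      else (lam n / lam k * ‖P z n‖ ^ 2 - ‖P z k‖ ^ 2) / D z
  | .inr qb =>
      if qb.2 then 2 * lam qb.1.1.2 * (z ^ (a qb.1.1.1 : ℂ) * conj (P z qb.1.1.2)).im / D z
      else -2 * lam qb.1.1.2 * (z ^ (a qb.1.1.1 : ℂ) * conj (P z qb.1.1.2)).re / D z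

section TodaFactor

variable {n : ℕ} (lam : ℕ → ℝ) (c : ℕ → ℕ → ℂ) (α : TodaIdx n → ℝ)

noncomputable def todaDiag : Fin (n + 1) → ℝ :=
  Fin.lastCases (∑ k, α (.inl k) * (lam n / lam k)) fun k => -α (.inl k)

noncomputable def todaOffDiag : Matrix (Fin (n + 1)) (Fin (n + 1)) ℂ :=
  Matrix.of fun j i => if h : j < i then
    -2 * lam i * (α (.inr (⟨(j, i), h⟩, false)) + α (.inr (⟨(j, i), h⟩, true)) * I) else 0

def todaCoeff : Matrix (Fin (n + 1)) (Fin (n + 1)) ℂ :=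
  Matrix.of fun i j => if (j : ℕ) = i then 1 else if (j : ℕ) < i then c i j else 0

noncomputable def todaFactor : Matrix (Fin (n + 1)) (Fin (n + 1)) ℂ :=
  (todaCoeff c)ᵀ * diagonal (fun i => (todaDiag lam α i : ℂ)) + todaOffDiag lam α

theorem re_dotProduct_diagonal_todaDiag (v : Fin (n + 1) → ℂ) :
    (v ⬝ᵥ diagonal (fun i => (todaDiag lam α i : ℂ)) *ᵥ star v).re =
      ∑ k, α (.inl k) * (lam n / lam k * ‖v (Fin.last n)‖ ^ 2 - ‖v k.castSucc‖ ^ 2) := by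
  have hterm (i : Fin (n + 1)) :
      (v i * (todaDiag lam α i : ℂ) * star (v i)).re = todaDiag lam α i * ‖v i‖ ^ 2 := by
    rw [mul_right_comm, Complex.star_def, mul_conj, normSq_eq_norm_sq, ← ofReal_mul, ofReal_re,
      mul_comm]
  rw [dotProduct, re_sum]
  simp only [mulVec_diagonal, Pi.star_apply, ← mul_assoc, hterm]
  rw [Fin.sum_univ_castSucc]
  simp only [todaDiag, Fin.lastCases_last, Fin.lastCases_castSucc]
  rw [Finset.sum_mul, ← Finset.sum_add_distrib]
  exact Finset.sum_congr rfl fun k _ => by ring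

theorem re_dotProduct_todaOffDiag (u v : Fin (n + 1) → ℂ) :
    (u ⬝ᵥ todaOffDiag lam α *ᵥ star v).re =
      ∑ q : {q : Fin (n + 1) × Fin (n + 1) // q.1 < q.2},
        (α (.inr (q, false)) * (-2 * lam q.1.2 * (u q.1.1 * conj (v q.1.2)).re) +
          α (.inr (q, true)) * (2 * lam q.1.2 * (u q.1.1 * conj (v q.1.2)).im)) := by
  rw [dotProduct_mulVec_star_eq_sum, re_sum,
    ← Fintype.sum_subtype_add_sum_subtype (fun q : Fin (n + 1) × Fin (n + 1) => q.1 < q.2),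
    Finset.sum_eq_zero (fun (q : {q : Fin (n + 1) × Fin (n + 1) // ¬q.1 < q.2}) _ => (by
      simp [todaOffDiag, q.2])), add_zero]
  refine Finset.sum_congr rfl fun q _ => ?_
  simp only [todaOffDiag, of_apply, dif_pos q.2, Complex.star_def, mul_re, mul_im, add_re, add_im,
    ofReal_re, ofReal_im, I_re, I_im, re_ofNat, im_ofNat, neg_re, neg_im]
  ring

theorem todaCoeff_mulVec {a : ℕ → ℝ} {P : ℂ → ℕ → ℂ}
    (hP : ∀ z k, P z k = z ^ (a k : ℂ) + ∑ j ∈ Finset.range k, c k j * z ^ (a j : ℂ)) (z : ℂ) :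
    todaCoeff c *ᵥ (fun j : Fin (n + 1) => z ^ (a j : ℂ)) = fun i : Fin (n + 1) => P z i := by
  funext i
  set t : ℕ → ℂ := fun j => (if j = i then 1 else if j < i then c i j else 0) * z ^ (a j : ℂ)
  have hsum : ∑ j ∈ Finset.range (n + 1), t j = ∑ j ∈ Finset.range (i + 1), t j := by
    refine (Finset.sum_subset (Finset.range_subset_range.2 i.isLt) fun j _ hj => ?_).symm
    simp only [Finset.mem_range] at hj
    simp only [t, if_neg (show j ≠ i by omega), if_neg (show ¬j < i by omega), zero_mul]
  calc (todaCoeff c *ᵥ fun j : Fin (n + 1) => z ^ (a j : ℂ)) i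
      = ∑ j ∈ Finset.range (n + 1), t j := Fin.sum_univ_eq_sum_range t (n + 1)
    _ = P z i := by
      rw [hsum, Finset.sum_range_succ, hP, add_comm]
      congr 1
      · simp [t]
      · exact Finset.sum_congr rfl fun j hj => by
          simp [t, (Finset.mem_range.1 hj).ne, Finset.mem_range.1 hj]

theorem todaFactor_apply (j i : Fin (n + 1)) :
    todaFactor lam c α j i = todaCoeff c i j * todaDiag lam α i + todaOffDiag lam α j i := by
  simp [todaFactor, mul_diagonal]

theorem todaFactor_apply_self (i : Fin (n + 1)) : todaFactor lam c α i i = todaDiag lam α i := by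
  simp [todaFactor_apply, todaCoeff, todaOffDiag]

theorem todaFactor_blockTriangular : (todaFactor lam c α).BlockTriangular id := by
  intro j i (hij : i < j)
  have hij' : (i : ℕ) < j := hij
  simp [todaFactor_apply, todaCoeff, todaOffDiag, hij'.ne', hij.not_gt]

theorem todaCoeff_map_star_blockTriangular :
    ((todaCoeff c).map star : Matrix (Fin (n + 1)) (Fin (n + 1)) ℂ).BlockTriangular
      OrderDual.toDual := by
  intro i j (hij : i < j)
  have hij' : (i : ℕ) < j := hij
  simp [todaCoeff, hij'.ne', hij.not_gt]

theorem todaCoeff_map_star_apply_self (i : Fin (n + 1)) :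
    ((todaCoeff c).map star : Matrix (Fin (n + 1)) (Fin (n + 1)) ℂ) i i = 1 := by
  simp [todaCoeff]

variable {lam c α}

theorem eq_zero_of_todaFactor_eq_zero (hlam : ∀ i ≤ n, lam i ≠ 0) (h : todaFactor lam c α = 0) :
    α = 0 := by
  have hdiag (i : Fin (n + 1)) : todaDiag lam α i = 0 := by
    simpa [todaFactor_apply_self] using congrFun₂ h i i
  have hoff (j i : Fin (n + 1)) : todaOffDiag lam α j i = 0 := by
    simpa [todaFactor_apply, hdiag] using congrFun₂ h j i
  funext r
  rcases r with k | ⟨⟨⟨j, i⟩, hji⟩, b⟩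
  · simpa [todaDiag] using hdiag k.castSucc
  · have hκ := hoff j i
    simp only [todaOffDiag, of_apply, dif_pos hji, mul_eq_zero, neg_eq_zero, OfNat.ofNat_ne_zero,
      ofReal_eq_zero, hlam i (Nat.lt_succ_iff.1 i.isLt), false_or] at hκ
    have hre : α (.inr (⟨(j, i), hji⟩, false)) = 0 := by simpa using congrArg re hκ
    have him : α (.inr (⟨(j, i), hji⟩, true)) = 0 := by simpa using congrArg im hκ
    cases b
    exacts [hre, him]

end TodaFactor

section TodaTheta

variable {n : ℕ} {lam a : ℕ → ℝ} {c : ℕ → ℕ → ℂ} {P : ℂ → ℕ → ℂ} {D : ℂ → ℝ}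

theorem sum_mul_todaTheta
    (hP : ∀ z k, P z k = z ^ (a k : ℂ) + ∑ j ∈ Finset.range k, c k j * z ^ (a j : ℂ))
    (ha0 : a 0 = 0) (α : TodaIdx n → ℝ) (z : ℂ) :
    ∑ r, α r * todaTheta n lam a P D r z =
      ((fun j : Fin (n + 1) => z ^ (a j : ℂ)) ⬝ᵥ (todaFactor lam c α * (todaCoeff c).map star) *ᵥ
        star (fun j : Fin (n + 1) => z ^ (a j : ℂ))).re / D z := by
  have hP0 : P z 0 = 1 := by simp [hP, ha0]
  rw [todaFactor, dotProduct_transpose_mul_add_mul_map_star, todaCoeff_mulVec c hP, add_re,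
    re_dotProduct_diagonal_todaDiag, re_dotProduct_todaOffDiag, Fintype.sum_sum_type,
    Fintype.sum_prod_type, add_div, Finset.sum_div, Finset.sum_div]
  congr 1
  · refine Finset.sum_congr rfl fun k _ => ?_
    by_cases hk : (k : ℕ) = 0
    · simp [todaTheta, hk, hP0, mul_div_assoc]
    · simp [todaTheta, hk, mul_div_assoc]
  · refine Finset.sum_congr rfl fun q _ => ?_
    simp only [todaTheta, Fintype.sum_bool, if_true, Bool.false_eq_true, if_false]
    ring

theorem linearIndependent_todaTheta (ha : Injective fun i : Fin (n + 1) => a i)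
    (hlam : ∀ i ≤ n, lam i ≠ 0)
    (hP : ∀ z k, P z k = z ^ (a k : ℂ) + ∑ j ∈ Finset.range k, c k j * z ^ (a j : ℂ))
    (ha0 : a 0 = 0) (hD : ∀ z, D z ≠ 0) :
    LinearIndependent ℝ fun r (θ : Ioo (-Real.pi) Real.pi) =>
      todaTheta n lam a P D r (exp ((1 + I) * θ)) := by
  refine Fintype.linearIndependent_iff.2 fun α hα => congrFun ?_
  have hre (θ : ℝ) (hθ : θ ∈ Ioo (-Real.pi) Real.pi) :
      ((fun j : Fin (n + 1) => exp ((1 + I) * θ) ^ (a j : ℂ)) ⬝ᵥ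
        (todaFactor lam c α * (todaCoeff c).map star) *ᵥ
          star (fun j : Fin (n + 1) => exp ((1 + I) * θ) ^ (a j : ℂ))).re = 0 := by
    have hθ := congrFun hα ⟨θ, hθ⟩
    simp only [Finset.sum_apply, Pi.smul_apply, smul_eq_mul, Pi.zero_apply] at hθ
    rw [sum_mul_todaTheta hP ha0] at hθ
    exact (div_eq_zero_iff.1 hθ).resolve_right (hD _)
  refine eq_zero_of_todaFactor_eq_zero (c := c) hlam ?_
  exact eq_zero_of_mul_add_conjTranspose_eq_zero (todaFactor_blockTriangular lam c α)
    (todaCoeff_map_star_blockTriangular c) (todaCoeff_map_star_apply_self c)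
    (fun i => by simp [todaFactor_apply_self]) (add_conjTranspose_eq_zero_of_re_eq_zero ha hre)

end TodaTheta

theorem stmt13 (n : ℕ)
    (μ : ℕ → ℝ) (hμ : ∀ i, 1 ≤ i → i ≤ n → 0 < μ i)
    (a : ℕ → ℝ) (ha0 : a 0 = 0) (ha : ∀ i, a (i + 1) = a i + μ (i + 1))
    (lam : ℕ → ℝ) (hlam : ∀ i, i ≤ n → 0 < lam i)
    (c : ℕ → ℕ → ℂ)
    (P : ℂ → ℕ → ℂ)
    (hP : ∀ z k, P z k = z ^ (a k : ℂ) + ∑ j ∈ Finset.range k, c k j * z ^ (a j : ℂ))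
    (D : ℂ → ℝ)
    (hD : ∀ z, D z = lam 0 + ∑ i ∈ Finset.Icc 1 n, lam i * ‖P z i‖ ^ 2) :
    ∃ p : TodaIdx n → ℂ,
      (∀ t, p t ≠ 0) ∧
      (Matrix.of (fun r t : TodaIdx n =>
        match r with
        | Sum.inl k =>
            if (k : ℕ) = 0 then
              (lam n / lam 0 * ‖P (p t) n‖ ^ 2 - 1) / D (p t)
            else
              (lam n / lam (k : ℕ) * ‖P (p t) n‖ ^ 2
                - ‖P (p t) (k : ℕ)‖ ^ 2) / D (p t)
        | Sum.inr (q, bb) =>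
            if bb then
              2 * lam (q.1.2 : ℕ) *
                ((p t) ^ (a (q.1.1 : ℕ) : ℂ) * (starRingEnd ℂ) (P (p t) (q.1.2 : ℕ))).im
                / D (p t)
            else
              -2 * lam (q.1.2 : ℕ) *
                ((p t) ^ (a (q.1.1 : ℕ) : ℂ) * (starRingEnd ℂ) (P (p t) (q.1.2 : ℕ))).re
                / D (p t))).det ≠ 0 := by
  have ha_mono : StrictMono fun i : Fin (n + 1) => a i :=
    Fin.strictMono_iff_lt_succ.2 fun i => by
      simpa [ha] using hμ (i + 1) (Nat.succ_pos i) i.isLt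
  have hD_pos (z : ℂ) : 0 < D z := by
    rw [hD]
    exact add_pos_of_pos_of_nonneg (hlam 0 n.zero_le) (Finset.sum_nonneg fun i hi =>
      mul_nonneg (hlam i (Finset.mem_Icc.1 hi).2).le (sq_nonneg _))
  obtain ⟨θ, hθ⟩ := (linearIndependent_todaTheta ha_mono.injective (fun i hi => (hlam i hi).ne')
    hP ha0 fun z => (hD_pos z).ne').exists_det_ne_zero
  refine ⟨fun t => exp ((1 + I) * (θ t : ℝ)), fun t => exp_ne_zero _, ?_⟩
  -- the two matrices differ only in the instance path to `CommRing ℝ` and in how the index is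
  -- destructured
  convert hθ using 2
  · rfl
  · ext (k | ⟨q, b⟩) t <;> rfl
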